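/- arXiv:2211.11862 — 4 statements merged into one kernel-verified Lean document; each statement's English description precedes it below -/
import Mathlib

section
/- Let K be a symmetric positive semi-definite N×N real matrix with non-negative entries. Then the function η ↦ ρ(K·Diag(η)) is convex on [0,1]^N, where ρ denotes the spectral radius. -/
open Matrix

noncomputable def specRadC {n : Type*} [Fintype n] [DecidableEq n] (M : Matrix n n ℂ) : ℝ :=
  sSup ((fun z : ℂ => ‖z‖) '' spectrum ℂ M)

noncomputable def specRad {n : Type*} [Fintype n] [DecidableEq n] (M : Matrix n n ℝ) : ℝ :=
  specRadC (M.map Complex.ofReal)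

section aux

variable {N : ℕ}

lemma spectrum_toEuclideanCLM (M : Matrix (Fin N) (Fin N) ℂ) :
    spectrum ℂ (toEuclideanCLM (𝕜 := ℂ) M) = spectrum ℂ M :=
  AlgEquiv.spectrum_eq (toEuclideanCLM (𝕜 := ℂ)) M

lemma bddAbove_abs_spectrum (hN : 0 < N) (M : Matrix (Fin N) (Fin N) ℂ) :
    BddAbove ((fun z : ℂ => ‖z‖) '' spectrum ℂ M) := by
  haveI : NeZero N := ⟨hN.ne'⟩
  refine ⟨‖toEuclideanCLM (𝕜 := ℂ) M‖, ?_⟩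
  rintro r ⟨z, hz, rfl⟩
  rw [← spectrum_toEuclideanCLM] at hz
  exact spectrum.norm_le_norm_of_mem hz

lemma specRadC_mul_comm (hN : 0 < N) (A B : Matrix (Fin N) (Fin N) ℂ) :
    specRadC (A * B) = specRadC (B * A) := by
  haveI : NeZero N := ⟨hN.ne'⟩
  have key : ∀ C D : Matrix (Fin N) (Fin N) ℂ,
      spectrum ℂ (C * D) \ {0} = spectrum ℂ (D * C) \ {0} →
      specRadC (C * D) ≤ specRadC (D * C) := by
    intro C D h
    have hne : (spectrum ℂ (C * D)).Nonempty := by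
      rw [← spectrum_toEuclideanCLM, _root_.map_mul]; exact spectrum.nonempty _
    have hne' : (spectrum ℂ (D * C)).Nonempty := by
      rw [← spectrum_toEuclideanCLM, _root_.map_mul]; exact spectrum.nonempty _
    refine csSup_le (hne.image _) ?_
    rintro r ⟨z, hz, rfl⟩
    by_cases hz0 : z = 0
    · subst hz0
      obtain ⟨w, hw⟩ := hne'
      simp only [norm_zero]
      calc (0:ℝ) ≤ ‖w‖ := norm_nonneg w
        _ ≤ _ := le_csSup (bddAbove_abs_spectrum hN _) ⟨w, hw, rfl⟩
    · have hmem : z ∈ spectrum ℂ (D * C) \ {0} := by rw [← h]; exact ⟨hz, hz0⟩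
      have hmem := hmem.1
      exact le_csSup (bddAbove_abs_spectrum hN _) ⟨z, hmem, rfl⟩
  have h := spectrum.nonzero_mul_comm (𝕜 := ℂ) A B
  exact le_antisymm (key A B h) (key B A h.symm)

lemma specRadC_hermitian (hN : 0 < N) (M : Matrix (Fin N) (Fin N) ℂ) (hM : M.IsHermitian) :
    specRadC M = ‖toEuclideanCLM (𝕜 := ℂ) M‖ := by
  haveI : NeZero N := ⟨hN.ne'⟩
  set a := toEuclideanCLM (𝕜 := ℂ) M with ha_def
  have ha : _root_.IsSelfAdjoint a := by
    rw [_root_.IsSelfAdjoint, ha_def, ← map_star]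
    exact congrArg _ hM
  have hspec : spectrum ℂ a = spectrum ℂ M := spectrum_toEuclideanCLM M
  have hrad : spectralRadius ℂ a = ‖a‖₊ := ha.spectralRadius_eq_nnnorm
  obtain ⟨z, hz, hznorm⟩ := spectrum.exists_nnnorm_eq_spectralRadius a
  have hz' : z ∈ spectrum ℂ M := hspec ▸ hz
  have hzval : ‖z‖ = ‖a‖ := by
    have h1 := hznorm.trans hrad
    have h2 : ‖z‖₊ = ‖a‖₊ := by exact_mod_cast h1
    simpa using congrArg NNReal.toReal h2
  refine le_antisymm ?_ ?_
  · refine csSup_le ⟨‖z‖, z, hz', rfl⟩ ?_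
    rintro r ⟨w, hw, rfl⟩
    have hw' : w ∈ spectrum ℂ a := hspec ▸ hw
    exact spectrum.norm_le_norm_of_mem hw'
  · rw [← hzval]
    exact le_csSup (bddAbove_abs_spectrum hN M) ⟨z, hz', rfl⟩

end aux

theorem stmt4 (N : ℕ) (K : Matrix (Fin N) (Fin N) ℝ) (hK : ∀ i j, 0 ≤ K i j)
    (hpsd : K.PosSemidef) :
    ConvexOn ℝ (Set.Icc (0 : Fin N → ℝ) 1)
      (fun η => specRad (K * Matrix.diagonal η)) := by
  rcases Nat.eq_zero_or_pos N with hN | hN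
  · subst hN
    have h0 : ∀ η : Fin 0 → ℝ, specRad (K * Matrix.diagonal η) = 0 := by
      intro η
      simp [specRad, specRadC, spectrum.of_subsingleton, Real.sSup_empty]
    simp only [h0]
    exact convexOn_const 0 (convex_Icc _ _)
  · haveI : NeZero N := ⟨hN.ne'⟩
    haveI hnt : Nontrivial (EuclideanSpace ℂ (Fin N) →L[ℂ] EuclideanSpace ℂ (Fin N)) := by
      refine nontrivial_of_ne 1 0 fun h => ?_
      have h2 := congrArg (fun f => ‖f‖) h
      simp only [norm_zero] at h2
      rw [show (1 : EuclideanSpace ℂ (Fin N) →L[ℂ] EuclideanSpace ℂ (Fin N))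
          = ContinuousLinearMap.id ℂ _ from rfl, ContinuousLinearMap.norm_id] at h2
      exact one_ne_zero h2
    set φ : Matrix (Fin N) (Fin N) ℝ →+* Matrix (Fin N) (Fin N) ℂ :=
      (Complex.ofRealHom).mapMatrix with hφ
    have hφdef : ∀ M : Matrix (Fin N) (Fin N) ℝ, φ M = M.map Complex.ofReal := fun _ => rfl
    obtain ⟨Q, hQherm, hQQ⟩ : ∃ Q : Matrix (Fin N) (Fin N) ℝ, Q.IsHermitian ∧ Q * Q = K := by
      open scoped MatrixOrder in
      exact ⟨CFC.sqrt K, (CFC.sqrt_nonneg K).posSemidef.1, CFC.sqrt_mul_sqrt_self K hpsd.nonneg⟩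
    set T : (Fin N → ℝ) → (EuclideanSpace ℂ (Fin N) →L[ℂ] EuclideanSpace ℂ (Fin N)) :=
      fun η => toEuclideanCLM (𝕜 := ℂ) (φ (Q * Matrix.diagonal η * Q)) with hT
    have hsymm : ∀ η : Fin N → ℝ, (Q * Matrix.diagonal η * Q)ᴴ = Q * Matrix.diagonal η * Q := by
      intro η
      rw [conjTranspose_mul, conjTranspose_mul, hQherm.eq, diagonal_conjTranspose]
      simp [Matrix.mul_assoc, star_trivial]
    have hTherm : ∀ η, (φ (Q * Matrix.diagonal η * Q)).IsHermitian := by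
      intro η
      exact Matrix.IsHermitian.map (hsymm η) Complex.ofReal
        (fun x => by simp [Complex.conj_ofReal])
    have key : ∀ η, specRad (K * Matrix.diagonal η) = ‖T η‖ := by
      intro η
      have h1 : specRad (K * Matrix.diagonal η)
          = specRadC (φ Q * φ (Q * Matrix.diagonal η)) := by
        rw [specRad, ← hφdef, ← _root_.map_mul, ← hQQ, Matrix.mul_assoc]
      rw [h1, specRadC_mul_comm hN, ← _root_.map_mul]
      exact specRadC_hermitian hN _ (hTherm η)
    simp only [key]
    have hφsmul : ∀ (a : ℝ) (M : Matrix (Fin N) (Fin N) ℝ), φ (a • M) = (a : ℂ) • φ M := by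
      intro a M
      ext i j
      simp [hφdef, Complex.ofReal_mul]
    have hTlin : ∀ (a b : ℝ) (x y : Fin N → ℝ),
        T (a • x + b • y) = (a : ℂ) • T x + (b : ℂ) • T y := by
      intro a b x y
      have hmat : Q * Matrix.diagonal (a • x + b • y) * Q
          = a • (Q * Matrix.diagonal x * Q) + b • (Q * Matrix.diagonal y * Q) := by
        have hd : Matrix.diagonal (a • x + b • y)
            = a • Matrix.diagonal x + b • Matrix.diagonal y := by
          ext i j
          by_cases h : i = j <;> simp [Matrix.diagonal_apply, h]
        rw [hd]
        simp only [Matrix.mul_add, Matrix.add_mul, Matrix.mul_smul, Matrix.smul_mul]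
      rw [hT]
      simp only [hmat, map_add, hφsmul, _root_.map_smul]
    refine ⟨convex_Icc _ _, ?_⟩
    intro x hx y hy a b ha hb hab
    simp only
    calc ‖T (a • x + b • y)‖ = ‖(a:ℂ) • T x + (b:ℂ) • T y‖ := by rw [hTlin]
      _ ≤ ‖(a:ℂ) • T x‖ + ‖(b:ℂ) • T y‖ := norm_add_le _ _
      _ = a * ‖T x‖ + b * ‖T y‖ := by
          rw [norm_smul ((a:ℂ)) (T x), norm_smul ((b:ℂ)) (T y)]
          simp [Complex.norm_real, abs_of_nonneg, ha, hb]
      _ ≤ a * ‖T x‖ + b * ‖T y‖ := le_rfl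
end

section
/- Let K be an N×N matrix with non-negative entries that is diagonally symmetrizable, i.e., there exists a diagonal matrix D with positive diagonal entries such that D·K·D^{-1} is symmetric. If all eigenvalues of K are non-negative, then η ↦ ρ(K·Diag(η)) is convex on [0,1]^N. -/
open Matrix

section Aux

variable {n : Type*} [Fintype n] [DecidableEq n]

private lemma spec_swap' (A B : Matrix n n ℂ) :
    spectrum ℂ (A * B) = spectrum ℂ (B * A) := by
  have h0 : (0:ℂ) ∈ spectrum ℂ (A*B) ↔ (0:ℂ) ∈ spectrum ℂ (B*A) := by
    rw [spectrum.zero_mem_iff, spectrum.zero_mem_iff, Matrix.isUnit_iff_isUnit_det,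
      Matrix.isUnit_iff_isUnit_det, det_mul, det_mul, mul_comm]
  have h := spectrum.nonzero_mul_comm (𝕜 := ℂ) A B
  ext μ
  rcases eq_or_ne μ 0 with rfl | hμ
  · exact h0
  · constructor <;> intro hm
    · exact (h ▸ (Set.mem_diff_singleton.mpr ⟨hm, hμ⟩ : μ ∈ spectrum ℂ (A*B) \ {0})).1
    · exact (h.symm ▸ (Set.mem_diff_singleton.mpr ⟨hm, hμ⟩ : μ ∈ spectrum ℂ (B*A) \ {0})).1

private lemma map_eq_phi' (M : Matrix n n ℝ) :
    M.map Complex.ofReal = Complex.ofRealHom.mapMatrix M := rfl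

private lemma spec_map_hermitian' {A : Matrix n n ℝ} (hA : A.IsHermitian) :
    spectrum ℂ (A.map Complex.ofReal) = Set.range (fun i => (hA.eigenvalues i : ℂ)) := by
  have hU1 : (hA.eigenvectorUnitary : Matrix n n ℝ) *
      star (hA.eigenvectorUnitary : Matrix n n ℝ) = 1 :=
    (Matrix.mem_unitaryGroup_iff).mp hA.eigenvectorUnitary.2
  have hU2 : star (hA.eigenvectorUnitary : Matrix n n ℝ) *
      (hA.eigenvectorUnitary : Matrix n n ℝ) = 1 :=
    (Matrix.mem_unitaryGroup_iff').mp hA.eigenvectorUnitary.2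
  set f := (Complex.ofRealHom.mapMatrix : Matrix n n ℝ →+* Matrix n n ℂ)
  set u : (Matrix n n ℂ)ˣ :=
    ⟨f hA.eigenvectorUnitary, f (star (hA.eigenvectorUnitary : Matrix n n ℝ)),
      by rw [← _root_.map_mul, hU1, _root_.map_one],
      by rw [← _root_.map_mul, hU2, _root_.map_one]⟩ with hu
  have hAdec : f A = (u : Matrix n n ℂ) * f (diagonal (RCLike.ofReal ∘ hA.eigenvalues)) *
      ((u⁻¹ : (Matrix n n ℂ)ˣ) : Matrix n n ℂ) := by
    conv_lhs => rw [hA.spectral_theorem]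
    rw [Unitary.conjStarAlgAut_apply, _root_.map_mul, _root_.map_mul]
    rfl
  rw [map_eq_phi', hAdec, spectrum.units_conjugate]
  have : f (diagonal (RCLike.ofReal ∘ hA.eigenvalues))
      = diagonal (fun i => (hA.eigenvalues i : ℂ)) := by
    rw [show f (diagonal (RCLike.ofReal ∘ hA.eigenvalues))
        = (diagonal (RCLike.ofReal ∘ hA.eigenvalues)).map Complex.ofReal from rfl,
      Matrix.diagonal_map (by simp)]
    simp [Function.comp]
  rw [this, spectrum_diagonal]

variable [Nonempty n]

private lemma rayleigh_le' {A : Matrix n n ℝ} (hA : A.IsHermitian) (x : n → ℝ) :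
    x ⬝ᵥ (A *ᵥ x) ≤ (⨆ i, hA.eigenvalues i) * (x ⬝ᵥ x) := by
  set U : Matrix n n ℝ := (hA.eigenvectorUnitary : Matrix n n ℝ) with hUdef
  have hU1 : U * Uᵀ = 1 := by
    have := (Matrix.mem_unitaryGroup_iff).mp hA.eigenvectorUnitary.2
    simpa [star_eq_conjTranspose] using this
  set d := hA.eigenvalues
  set y := Uᵀ *ᵥ x with hy
  have hdec : A = U * diagonal d * Uᵀ := by
    have := hA.spectral_theorem
    simpa [star_eq_conjTranspose] using this
  have hxy : x ⬝ᵥ (A *ᵥ x) = ∑ i, d i * (y i)^2 := by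
    rw [hdec]
    rw [← mulVec_mulVec, ← mulVec_mulVec, dotProduct_mulVec x U, ← mulVec_transpose,
      ← hy, dotProduct]
    congr 1; ext i
    rw [mulVec_diagonal]; ring
  have hyy : y ⬝ᵥ y = x ⬝ᵥ x := by
    rw [hy, dotProduct_mulVec (Uᵀ *ᵥ x) Uᵀ x,
      show (Uᵀ *ᵥ x) ᵥ* Uᵀ = U *ᵥ (Uᵀ *ᵥ x) from vecMul_transpose U _,
      mulVec_mulVec, hU1, one_mulVec]
  have hbdd : BddAbove (Set.range d) := (Set.finite_range d).bddAbove
  calc x ⬝ᵥ (A *ᵥ x) = ∑ i, d i * (y i)^2 := hxy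
    _ ≤ ∑ i, (⨆ j, d j) * (y i)^2 :=
        Finset.sum_le_sum fun i _ => mul_le_mul_of_nonneg_right (le_ciSup hbdd i) (sq_nonneg _)
    _ = (⨆ j, d j) * (y ⬝ᵥ y) := by
        rw [← Finset.mul_sum, dotProduct]
        congr 1
        exact Finset.sum_congr rfl fun i _ => by rw [sq]
    _ = (⨆ j, d j) * (x ⬝ᵥ x) := by rw [hyy]

private lemma rayleigh_attained' {A : Matrix n n ℝ} (hA : A.IsHermitian) :
    ∃ x : n → ℝ, x ⬝ᵥ x = 1 ∧ x ⬝ᵥ (A *ᵥ x) = ⨆ i, hA.eigenvalues i := by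
  obtain ⟨i0, hi0⟩ := Finite.exists_max hA.eigenvalues
  have hbdd : BddAbove (Set.range hA.eigenvalues) := (Set.finite_range _).bddAbove
  have hsup : (⨆ i, hA.eigenvalues i) = hA.eigenvalues i0 :=
    le_antisymm (ciSup_le hi0) (le_ciSup hbdd i0)
  have hnorm : ‖hA.eigenvectorBasis i0‖ = 1 := hA.eigenvectorBasis.orthonormal.1 i0
  have hxx : (⇑(hA.eigenvectorBasis i0) : n → ℝ) ⬝ᵥ ⇑(hA.eigenvectorBasis i0) = 1 := by
    have : (⇑(hA.eigenvectorBasis i0) : n → ℝ) ⬝ᵥ ⇑(hA.eigenvectorBasis i0)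
        = ‖hA.eigenvectorBasis i0‖^2 := by
      rw [EuclideanSpace.norm_eq, Real.sq_sqrt (by positivity), dotProduct]
      congr 1; ext i; simp [Real.norm_eq_abs, sq_abs]; ring
    rw [this, hnorm, one_pow]
  refine ⟨⇑(hA.eigenvectorBasis i0), hxx, ?_⟩
  rw [hA.mulVec_eigenvectorBasis, dotProduct_smul, hxx, hsup, smul_eq_mul, mul_one]

private lemma psd_specRad' {M : Matrix n n ℝ} (hM : M.PosSemidef) :
    specRad M = ⨆ i, hM.1.eigenvalues i := by
  unfold specRad specRadC
  rw [spec_map_hermitian' hM.1, ← Set.range_comp]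
  have : ((fun z : ℂ => ‖z‖) ∘ fun i => ((hM.1.eigenvalues i : ℝ) : ℂ))
      = fun i => hM.1.eigenvalues i := by
    ext i
    simp [Function.comp, Complex.norm_real, Real.norm_eq_abs, abs_of_nonneg (hM.eigenvalues_nonneg i)]
  rw [this]
  rfl

private lemma psd_attained' {M : Matrix n n ℝ} (hM : M.PosSemidef) :
    ∃ x : n → ℝ, x ⬝ᵥ x = 1 ∧ x ⬝ᵥ (M *ᵥ x) = specRad M := by
  obtain ⟨x, h1, h2⟩ := rayleigh_attained' hM.1
  exact ⟨x, h1, by rw [h2, psd_specRad' hM]⟩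

private lemma psd_le' {M : Matrix n n ℝ} (hM : M.PosSemidef) (x : n → ℝ) :
    x ⬝ᵥ (M *ᵥ x) ≤ specRad M * (x ⬝ᵥ x) := by
  rw [psd_specRad' hM]
  exact rayleigh_le' hM.1 x

end Aux

theorem stmt6 (N : ℕ) (K : Matrix (Fin N) (Fin N) ℝ) (hK : ∀ i j, 0 ≤ K i j)
    (hsym : ∃ D : Fin N → ℝ, (∀ i, 0 < D i) ∧
      (Matrix.diagonal D * K * Matrix.diagonal (fun i => (D i)⁻¹)).IsSymm)
    (hpos : ∀ μ ∈ spectrum ℂ (K.map Complex.ofReal), ∃ x : ℝ, 0 ≤ x ∧ μ = x) :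
    ConvexOn ℝ (Set.Icc (0 : Fin N → ℝ) 1)
      (fun η => specRad (K * Matrix.diagonal η)) := by
  classical
  obtain ⟨D, hD, hS⟩ := hsym
  rcases Nat.eq_zero_or_pos N with hN | hN
  · subst hN
    haveI : Subsingleton (Matrix (Fin 0) (Fin 0) ℂ) :=
      ⟨fun a b => by ext i; exact i.elim0⟩
    have hf : (fun η : Fin 0 → ℝ => specRad (K * Matrix.diagonal η)) = fun _ => (0:ℝ) := by
      funext η
      unfold specRad specRadC
      rw [spectrum.of_subsingleton, Set.image_empty, Real.sSup_empty]
    rw [hf]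
    exact convexOn_const _ (convex_Icc _ _)
  haveI : Nonempty (Fin N) := ⟨⟨0, hN⟩⟩
  set f := (Complex.ofRealHom.mapMatrix :
    Matrix (Fin N) (Fin N) ℝ →+* Matrix (Fin N) (Fin N) ℂ) with hfdef
  set S := Matrix.diagonal D * K * Matrix.diagonal (fun i => (D i)⁻¹) with hSdef
  have hDne : ∀ i, D i ≠ 0 := fun i => (hD i).ne'
  have hDD : Matrix.diagonal D * Matrix.diagonal (fun i => (D i)⁻¹) = 1 := by
    rw [diagonal_mul_diagonal]
    rw [show (fun i => D i * (D i)⁻¹) = fun _ => (1:ℝ) from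
      funext fun i => mul_inv_cancel₀ (hDne i), diagonal_one]
  have hDD' : Matrix.diagonal (fun i => (D i)⁻¹) * Matrix.diagonal D = 1 := by
    rw [diagonal_mul_diagonal]
    rw [show (fun i => (D i)⁻¹ * D i) = fun _ => (1:ℝ) from
      funext fun i => inv_mul_cancel₀ (hDne i), diagonal_one]
  set u : (Matrix (Fin N) (Fin N) ℂ)ˣ :=
    ⟨f (Matrix.diagonal D), f (Matrix.diagonal fun i => (D i)⁻¹),
      by rw [← _root_.map_mul, hDD, _root_.map_one],
      by rw [← _root_.map_mul, hDD', _root_.map_one]⟩ with hu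
  have huval : (u : Matrix (Fin N) (Fin N) ℂ) = f (Matrix.diagonal D) := rfl
  have huinv : ((u⁻¹ : (Matrix (Fin N) (Fin N) ℂ)ˣ) : Matrix (Fin N) (Fin N) ℂ)
      = f (Matrix.diagonal fun i => (D i)⁻¹) := rfl
  have hKrec : Matrix.diagonal (fun i => (D i)⁻¹) * S * Matrix.diagonal D = K := by
    rw [hSdef]
    simp only [← mul_assoc]
    rw [hDD', one_mul, mul_assoc, hDD', mul_one]
  have hSH : S.IsHermitian := by
    rw [Matrix.IsHermitian, conjTranspose_eq_transpose_of_trivial]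
    exact hS
  have hspecS : spectrum ℂ (S.map Complex.ofReal) = spectrum ℂ (K.map Complex.ofReal) := by
    rw [map_eq_phi', map_eq_phi']
    have : f S = (u : Matrix (Fin N) (Fin N) ℂ) * f K *
        ((u⁻¹ : (Matrix (Fin N) (Fin N) ℂ)ˣ) : Matrix (Fin N) (Fin N) ℂ) := by
      rw [hSdef, _root_.map_mul, _root_.map_mul, huval, huinv]
    rw [this, spectrum.units_conjugate]
  have hev : ∀ i, 0 ≤ hSH.eigenvalues i := by
    intro i
    have hmem : ((hSH.eigenvalues i : ℝ) : ℂ) ∈ spectrum ℂ (K.map Complex.ofReal) := by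
      rw [← hspecS, spec_map_hermitian' hSH]
      exact ⟨i, rfl⟩
    obtain ⟨x, hx0, hx⟩ := hpos _ hmem
    rw [Complex.ofReal_inj.mp hx]
    exact hx0
  have hSpsd : S.PosSemidef := hSH.posSemidef_iff_eigenvalues_nonneg.mpr (fun i => hev i)
  set R := (open scoped MatrixOrder in CFC.sqrt S) with hRdef
  have hRpsd : R.PosSemidef := by
    open scoped MatrixOrder in exact Matrix.nonneg_iff_posSemidef.mp (CFC.sqrt_nonneg S)
  have hRH : R.IsHermitian := hRpsd.1
  have hRR : R * R = S := by
    open scoped MatrixOrder in exact CFC.sqrt_mul_sqrt_self S (Matrix.nonneg_iff_posSemidef.mpr hSpsd)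
  have keyEq : ∀ η : Fin N → ℝ,
      specRad (K * Matrix.diagonal η) = specRad (R * Matrix.diagonal η * R) := by
    intro η
    have hcomm : Matrix.diagonal D * Matrix.diagonal η
        = Matrix.diagonal η * Matrix.diagonal D := by
      have hco : (fun i => D i * η i) = (fun i => η i * D i) := funext fun i => mul_comm _ _
      rw [diagonal_mul_diagonal, diagonal_mul_diagonal, hco]
    have hm : K * Matrix.diagonal η
        = Matrix.diagonal (fun i => (D i)⁻¹) * (S * Matrix.diagonal η) * Matrix.diagonal D := by
      rw [← hKrec]
      calc Matrix.diagonal (fun i => (D i)⁻¹) * S * Matrix.diagonal D * Matrix.diagonal η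
          = Matrix.diagonal (fun i => (D i)⁻¹) * S
              * (Matrix.diagonal D * Matrix.diagonal η) := by rw [mul_assoc]
        _ = Matrix.diagonal (fun i => (D i)⁻¹) * S
              * (Matrix.diagonal η * Matrix.diagonal D) := by rw [hcomm]
        _ = Matrix.diagonal (fun i => (D i)⁻¹) * (S * Matrix.diagonal η) * Matrix.diagonal D := by
              simp only [mul_assoc]
    have hchain : spectrum ℂ ((K * Matrix.diagonal η).map Complex.ofReal)
        = spectrum ℂ ((R * Matrix.diagonal η * R).map Complex.ofReal) := by
      rw [map_eq_phi', map_eq_phi', hm]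
      rw [_root_.map_mul, _root_.map_mul, ← huval, ← huinv, spectrum.units_conjugate']
      have h2 : f (S * Matrix.diagonal η) = f R * f (R * Matrix.diagonal η) := by
        rw [← _root_.map_mul, ← hRR, mul_assoc]
      rw [h2, spec_swap', ← _root_.map_mul]
    unfold specRad specRadC
    rw [hchain]
  have hMpsd : ∀ η : Fin N → ℝ, 0 ≤ η → (R * Matrix.diagonal η * R).PosSemidef := by
    intro η hη
    have h := (posSemidef_diagonal_iff.mpr fun i => hη i).conjTranspose_mul_mul_same R
    rwa [hRH.eq] at h
  refine ⟨convex_Icc _ _, ?_⟩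
  intro p hp q hq a b ha hb hab
  simp only []
  have hp0 : (0 : Fin N → ℝ) ≤ p := hp.1
  have hq0 : (0 : Fin N → ℝ) ≤ q := hq.1
  have hpq0 : (0 : Fin N → ℝ) ≤ a • p + b • q := by
    intro i
    simp only [Pi.add_apply, Pi.smul_apply, Pi.zero_apply, smul_eq_mul]
    have := hp0 i
    have := hq0 i
    simp only [Pi.zero_apply] at *
    positivity
  have hlin : ∀ x : Fin N → ℝ,
      x ⬝ᵥ ((R * Matrix.diagonal (a • p + b • q) * R) *ᵥ x)
        = a * (x ⬝ᵥ ((R * Matrix.diagonal p * R) *ᵥ x))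
          + b * (x ⬝ᵥ ((R * Matrix.diagonal q * R) *ᵥ x)) := by
    intro x
    have hdiag : R * Matrix.diagonal (a • p + b • q) * R
        = a • (R * Matrix.diagonal p * R) + b • (R * Matrix.diagonal q * R) := by
      have : Matrix.diagonal (a • p + b • q)
          = a • Matrix.diagonal p + b • Matrix.diagonal q := by
        ext i j
        by_cases h : i = j <;> simp [Matrix.diagonal, h]
      rw [this]
      simp [Matrix.mul_add, Matrix.add_mul, Matrix.mul_smul, Matrix.smul_mul]
    rw [hdiag, add_mulVec, smul_mulVec, smul_mulVec, dotProduct_add,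
      dotProduct_smul, dotProduct_smul, smul_eq_mul, smul_eq_mul]
  rw [keyEq, keyEq, keyEq]
  obtain ⟨x, hx1, hx2⟩ := psd_attained' (hMpsd _ hpq0)
  rw [← hx2, hlin x]
  have l1 := psd_le' (hMpsd p hp0) x
  have l2 := psd_le' (hMpsd q hq0) x
  rw [hx1, mul_one] at l1 l2
  have := add_le_add (mul_le_mul_of_nonneg_left l1 ha) (mul_le_mul_of_nonneg_left l2 hb)
  simpa [smul_eq_mul] using this
end

section
/- Sylvester inertia for symmetrizable matrices with positive diagonal scaling: let K be an N×N real matrix that is diagonally symmetrizable (there exists D diagonal with positive entries such that D·K is symmetric), and let f, g ∈ ℝ^N have positive entries. Then K and Diag(f)·K·Diag(g) have the same number of positive eigenvalues and the same number of negative eigenvalues (counted with algebraic multiplicity). -/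
open Matrix

noncomputable def posCount {N : ℕ} (M : Matrix (Fin N) (Fin N) ℝ) : ℕ :=
  Multiset.card (((M.map Complex.ofReal).charpoly.roots).filter (fun μ => 0 < μ.re))

noncomputable def negCount {N : ℕ} (M : Matrix (Fin N) (Fin N) ℝ) : ℕ :=
  Multiset.card (((M.map Complex.ofReal).charpoly.roots).filter (fun μ => μ.re < 0))

section InertiaAux
open Polynomial Finset

variable {N : ℕ}

section DotAux
variable {ι : Type*} [Fintype ι] [DecidableEq ι]

lemma sum_dotProduct' (f : ι → Fin N → ℝ) (y : Fin N → ℝ) :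
    (∑ i, f i) ⬝ᵥ y = ∑ i, f i ⬝ᵥ y := by
  simp only [dotProduct, Finset.sum_apply, Finset.sum_mul]
  rw [Finset.sum_comm]

lemma dotProduct_sum' (x : Fin N → ℝ) (f : ι → Fin N → ℝ) :
    x ⬝ᵥ (∑ i, f i) = ∑ i, x ⬝ᵥ f i := by
  simp only [dotProduct, Finset.sum_apply, Finset.mul_sum]
  rw [Finset.sum_comm]

lemma quad_formula (M : Matrix (Fin N) (Fin N) ℝ)
    (w : ι → Fin N → ℝ) (μ : ι → ℝ)
    (horth : ∀ i j, w i ⬝ᵥ w j = if i = j then (1:ℝ) else 0)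
    (heig : ∀ i, M *ᵥ w i = μ i • w i) (c : ι → ℝ) :
    (∑ i, c i • w i) ⬝ᵥ (M *ᵥ ∑ i, c i • w i) = ∑ i, μ i * c i ^ 2 := by
  have h1 : M *ᵥ (∑ i, c i • w i) = ∑ i, (μ i * c i) • w i := by
    have h0 : M *ᵥ (∑ i, c i • w i) = ∑ i, M *ᵥ (c i • w i) := by
      rw [← M.mulVecLin_apply, map_sum]
      simp [Matrix.mulVecLin_apply, mulVec_smul]
    rw [h0]
    refine Finset.sum_congr rfl fun i _ => ?_
    rw [mulVec_smul, heig, smul_smul, mul_comm]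
  rw [h1, sum_dotProduct']
  refine Finset.sum_congr rfl fun i _ => ?_
  rw [smul_dotProduct, dotProduct_sum']
  simp only [dotProduct_smul, smul_eq_mul]
  have : ∀ j, c i * ((μ j * c j) * (w i ⬝ᵥ w j)) = if j = i then μ i * c i ^ 2 else 0 := by
    intro j
    rcases eq_or_ne j i with rfl | hji
    · simp [horth]; ring
    · rw [horth, if_neg (Ne.symm hji), if_neg hji]; ring
  calc c i • ∑ j, (μ j * c j) • (w i ⬝ᵥ w j) = ∑ j, c i * ((μ j * c j) * (w i ⬝ᵥ w j)) := by
        simp [Finset.mul_sum]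
    _ = ∑ j, if j = i then μ i * c i ^ 2 else 0 := Finset.sum_congr rfl fun j _ => this j
    _ = μ i * c i ^ 2 := by simp

end DotAux

lemma charpoly_conj_aux {R : Type*} [CommRing R] {n : Type*} [DecidableEq n] [Fintype n]
    (P M Q : Matrix n n R) (h1 : P * Q = 1) :
    (P * M * Q).charpoly = M.charpoly := by
  have hcomm : Commute (scalar n (X : R[X])) (Q.map C) :=
    scalar_commute _ (fun r' => Commute.all _ _) _
  have key : charmatrix (P * M * Q) = P.map C * charmatrix M * Q.map C := by
    unfold charmatrix
    rw [Matrix.mul_sub, Matrix.sub_mul]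
    congr 1
    · rw [Matrix.mul_assoc, hcomm.eq, ← Matrix.mul_assoc, ← RingHom.mapMatrix_apply,
        ← RingHom.mapMatrix_apply, ← _root_.map_mul, h1,
        _root_.map_one ((C : R →+* R[X]).mapMatrix : Matrix n n R →+* _), Matrix.one_mul]
    · simp only [← RingHom.mapMatrix_apply, ← _root_.map_mul]
  have hdet : (P.map (C : R →+* R[X])).det * (Q.map C).det = 1 := by
    rw [← Matrix.det_mul, ← RingHom.mapMatrix_apply, ← RingHom.mapMatrix_apply,
      ← _root_.map_mul, h1, _root_.map_one ((C : R →+* R[X]).mapMatrix : Matrix n n R →+* _),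
      Matrix.det_one]
  rw [Matrix.charpoly, Matrix.charpoly, key, Matrix.det_mul, Matrix.det_mul]
  ring_nf
  rw [mul_comm, ← mul_assoc, mul_comm ((Q.map C).det), hdet, one_mul]

lemma counts_similar (A B P Q : Matrix (Fin N) (Fin N) ℝ)
    (h1 : P * Q = 1) (hB : B = P * A * Q) :
    posCount B = posCount A ∧ negCount B = negCount A := by
  have hch : B.charpoly = A.charpoly := by rw [hB]; exact charpoly_conj_aux P A Q h1
  have hc : (B.map Complex.ofReal).charpoly = (A.map Complex.ofReal).charpoly := by
    have hcoe : (Complex.ofReal : ℝ → ℂ) = ⇑Complex.ofRealHom := rfl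
    rw [hcoe, Matrix.charpoly_map, Matrix.charpoly_map, hch]
  constructor
  · unfold posCount; rw [hc]
  · unfold negCount; rw [hc]

lemma roots_hermitian (A : Matrix (Fin N) (Fin N) ℝ) (hA : A.IsHermitian) :
    (A.map Complex.ofReal).charpoly.roots
      = (Finset.univ.val.map fun i => ((hA.eigenvalues i : ℝ) : ℂ)) := by
  have h1 : A.charpoly = (diagonal (RCLike.ofReal ∘ hA.eigenvalues) : Matrix (Fin N) (Fin N) ℝ).charpoly := by
    conv_lhs => rw [hA.spectral_theorem]
    exact charpoly_conj_aux _ _ _ (Unitary.coe_mul_star_self hA.eigenvectorUnitary)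
  have h2 : (diagonal (RCLike.ofReal ∘ hA.eigenvalues) : Matrix (Fin N) (Fin N) ℝ).charpoly
      = ∏ i, (X - C (hA.eigenvalues i)) := by
    rw [Matrix.charpoly_of_upperTriangular _ (Matrix.blockTriangular_diagonal _)]
    refine Finset.prod_congr rfl fun i _ => ?_
    simp [RCLike.ofReal_real_eq_id]
  have hcoe : (Complex.ofReal : ℝ → ℂ) = ⇑Complex.ofRealHom := rfl
  rw [hcoe, Matrix.charpoly_map, h1, h2]
  have h3 : (∏ i, (X - C (hA.eigenvalues i))).map Complex.ofRealHom
      = ∏ i, (X - C ((hA.eigenvalues i : ℝ) : ℂ)) := by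
    rw [Polynomial.map_prod]
    refine Finset.prod_congr rfl fun i _ => ?_
    simp
  rw [h3]
  have h4 : (∏ i, (X - C ((hA.eigenvalues i : ℝ) : ℂ)))
      = ((Finset.univ.val.map fun i => ((hA.eigenvalues i : ℝ) : ℂ)).map fun a => X - C a).prod := by
    rw [Multiset.map_map]
    rfl
  rw [h4, Polynomial.roots_multiset_prod_X_sub_C]
  simp

lemma posCount_hermitian (A : Matrix (Fin N) (Fin N) ℝ) (hA : A.IsHermitian) :
    posCount A = (Finset.univ.filter fun i => 0 < hA.eigenvalues i).card ∧
    negCount A = (Finset.univ.filter fun i => hA.eigenvalues i < 0).card := by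
  unfold posCount negCount
  rw [roots_hermitian A hA]
  constructor <;>
  · rw [Multiset.filter_map, Multiset.card_map]
    rfl

lemma isHermitian_of_isSymm (A : Matrix (Fin N) (Fin N) ℝ) (h : A.IsSymm) : A.IsHermitian := by
  rw [Matrix.IsHermitian, Matrix.conjTranspose_eq_transpose_of_trivial]; exact h

lemma orth_dot (A : Matrix (Fin N) (Fin N) ℝ) (hA : A.IsHermitian) (i j : Fin N) :
    (⇑(hA.eigenvectorBasis i) : Fin N → ℝ) ⬝ᵥ ⇑(hA.eigenvectorBasis j)
      = if i = j then 1 else 0 := by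
  have h0 : star (hA.eigenvectorUnitary : Matrix (Fin N) (Fin N) ℝ)
      * (hA.eigenvectorUnitary : Matrix (Fin N) (Fin N) ℝ) = 1 := by
    simpa using unitary.coe_star_mul_self hA.eigenvectorUnitary
  have h1 := congrFun (congrFun h0 i) j
  simpa [Matrix.mul_apply, Matrix.star_apply, Matrix.one_apply, dotProduct,
    Matrix.IsHermitian.eigenvectorUnitary_apply] using h1

lemma sylvester_le (A B P : Matrix (Fin N) (Fin N) ℝ)
    (hA : A.IsHermitian) (hB : B.IsHermitian) (hP : IsUnit P.det)
    (hBAP : B = Pᵀ * A * P) (ε : ℝ) :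
    (Finset.univ.filter fun i => 0 < ε * hB.eigenvalues i).card ≤
      (Finset.univ.filter fun i => 0 < ε * hA.eigenvalues i).card := by
  classical
  by_contra hcon
  push_neg at hcon
  set s : Finset (Fin N) := Finset.univ.filter (fun i => 0 < ε * hB.eigenvalues i) with hs
  set t : Finset (Fin N) := Finset.univ.filter (fun i => ¬ 0 < ε * hA.eigenvalues i) with ht
  set v : Fin N → Fin N → ℝ := fun i => ⇑(hB.eigenvectorBasis i) with hv
  set u : Fin N → Fin N → ℝ := fun i => ⇑(hA.eigenvectorBasis i) with hu
  have hv_orth : ∀ i j, v i ⬝ᵥ v j = if i = j then (1:ℝ) else 0 := orth_dot B hB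
  have hu_orth : ∀ i j, u i ⬝ᵥ u j = if i = j then (1:ℝ) else 0 := orth_dot A hA
  have hli : ∀ (w : Fin N → Fin N → ℝ),
      (∀ i j, w i ⬝ᵥ w j = if i = j then (1:ℝ) else 0) → LinearIndependent ℝ w := by
    intro w hw
    rw [Fintype.linearIndependent_iff]
    intro c hc i
    have h2 : (∑ j, c j • w j) ⬝ᵥ w i = c i := by
      rw [sum_dotProduct']
      have hterm : ∀ j, (c j • w j) ⬝ᵥ w i = if j = i then c i else 0 := by
        intro j; rw [smul_dotProduct, hw]
        rcases eq_or_ne j i with rfl | h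
        · simp
        · simp [h]
      rw [Finset.sum_congr rfl (fun j _ => hterm j)]
      simp
    rw [hc, zero_dotProduct] at h2; exact h2.symm
  have hvli : LinearIndependent ℝ v := hli v hv_orth
  have huli : LinearIndependent ℝ u := hli u hu_orth
  set W : Submodule ℝ (Fin N → ℝ) :=
    Submodule.span ℝ (Set.range (v ∘ (Subtype.val : {x // x ∈ s} → Fin N))) with hW
  set W' : Submodule ℝ (Fin N → ℝ) :=
    Submodule.span ℝ (Set.range (u ∘ (Subtype.val : {x // x ∈ t} → Fin N))) with hW'
  have hWrank : Module.finrank ℝ W = s.card := by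
    rw [hW, finrank_span_eq_card (hvli.comp Subtype.val Subtype.val_injective)]
    exact Fintype.card_coe s
  have hW'rank : Module.finrank ℝ W' = t.card := by
    rw [hW', finrank_span_eq_card (huli.comp Subtype.val Subtype.val_injective)]
    exact Fintype.card_coe t
  -- positivity of the quadratic form of B on W
  have hq_pos : ∀ x, x ∈ W → x ≠ 0 → 0 < ε * (x ⬝ᵥ B *ᵥ x) := by
    intro x hx hx0
    obtain ⟨c, hc⟩ := (Submodule.mem_span_range_iff_exists_fun ℝ).mp hx
    have hq : x ⬝ᵥ B *ᵥ x = ∑ i : {x // x ∈ s}, hB.eigenvalues i * c i ^ 2 := by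
      rw [← hc]
      exact quad_formula B _ (fun i : {x // x ∈ s} => hB.eigenvalues i)
        (fun i j => by simpa only [Function.comp_apply, Subtype.val_inj] using hv_orth i j)
        (fun i => hB.mulVec_eigenvectorBasis i) c
    have hcne : ∃ i, c i ≠ 0 := by
      by_contra hall
      push_neg at hall
      apply hx0
      rw [← hc]
      simp [hall]
    obtain ⟨i0, hi0⟩ := hcne
    rw [hq, Finset.mul_sum]
    apply Finset.sum_pos'
    · intro i _
      have his : 0 < ε * hB.eigenvalues i := (Finset.mem_filter.mp i.2).2
      rw [← mul_assoc]
      exact mul_nonneg (le_of_lt his) (sq_nonneg _)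
    · refine ⟨i0, Finset.mem_univ _, ?_⟩
      have his : 0 < ε * hB.eigenvalues i0 := (Finset.mem_filter.mp i0.2).2
      rw [← mul_assoc]
      have : (0:ℝ) < c i0 ^ 2 := by positivity
      exact mul_pos his this
  -- nonpositivity of the quadratic form of A on W'
  have hq_nonpos : ∀ y, y ∈ W' → ε * (y ⬝ᵥ A *ᵥ y) ≤ 0 := by
    intro y hy
    obtain ⟨c, hc⟩ := (Submodule.mem_span_range_iff_exists_fun ℝ).mp hy
    have hq : y ⬝ᵥ A *ᵥ y = ∑ i : {x // x ∈ t}, hA.eigenvalues i * c i ^ 2 := by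
      rw [← hc]
      exact quad_formula A _ (fun i : {x // x ∈ t} => hA.eigenvalues i)
        (fun i j => by simpa only [Function.comp_apply, Subtype.val_inj] using hu_orth i j)
        (fun i => hA.mulVec_eigenvectorBasis i) c
    rw [hq, Finset.mul_sum]
    apply Finset.sum_nonpos
    intro i _
    have hit : ¬ 0 < ε * hA.eigenvalues i := (Finset.mem_filter.mp i.2).2
    push_neg at hit
    rw [← mul_assoc]
    exact mul_nonpos_of_nonpos_of_nonneg hit (sq_nonneg _)
  -- the congruence map
  set L : (Fin N → ℝ) →ₗ[ℝ] (Fin N → ℝ) := P.mulVecLin with hL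
  have hLinj : Function.Injective L := by
    intro x y hxy
    have h2 := congrArg (fun z => P⁻¹ *ᵥ z) hxy
    simpa [hL, Matrix.mulVecLin_apply, Matrix.mulVec_mulVec,
      Matrix.nonsing_inv_mul P hP, Matrix.one_mulVec] using h2
  have hmaprank : Module.finrank ℝ (W.map L) = s.card := by
    rw [← hWrank]
    exact (LinearEquiv.finrank_eq (Submodule.equivMapOfInjective L hLinj W)).symm
  have hsum := Submodule.finrank_sup_add_finrank_inf_eq (W.map L) W'
  have hsup : Module.finrank ℝ ↥(W.map L ⊔ W') ≤ N :=
    le_trans (Submodule.finrank_le _) (le_of_eq (Module.finrank_fin_fun ℝ))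
  have hNt : (Finset.univ.filter fun i => 0 < ε * hA.eigenvalues i).card + t.card = N := by
    rw [ht]
    simpa using Finset.card_filter_add_card_filter_not
      (s := Finset.univ) (p := fun i => 0 < ε * hA.eigenvalues i)
  rw [hmaprank, hW'rank] at hsum
  have hpos' : 0 < Module.finrank ℝ ↥(W.map L ⊓ W') := by omega
  have hne : W.map L ⊓ W' ≠ ⊥ := by
    intro h
    rw [h, finrank_bot] at hpos'
    omega
  obtain ⟨z, hz, hz0⟩ := Submodule.exists_mem_ne_zero_of_ne_bot hne
  obtain ⟨hz1, hz2⟩ := Submodule.mem_inf.mp hz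
  obtain ⟨x, hxW, hxz⟩ := Submodule.mem_map.mp hz1
  have hx0 : x ≠ 0 := fun h => hz0 (by rw [← hxz, h, map_zero])
  have h1 : 0 < ε * (x ⬝ᵥ B *ᵥ x) := hq_pos x hxW hx0
  have hcong : x ⬝ᵥ B *ᵥ x = z ⬝ᵥ A *ᵥ z := by
    have hzx : z = P *ᵥ x := by rw [← hxz]; rfl
    rw [hzx, hBAP, ← Matrix.mulVec_mulVec, ← Matrix.mulVec_mulVec,
      Matrix.dotProduct_mulVec x Pᵀ, Matrix.vecMul_transpose]
  have h2 : ε * (z ⬝ᵥ A *ᵥ z) ≤ 0 := hq_nonpos z hz2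
  rw [hcong] at h1
  linarith

lemma sylvester_eq (A B P : Matrix (Fin N) (Fin N) ℝ)
    (hA : A.IsHermitian) (hB : B.IsHermitian) (hP : IsUnit P.det)
    (hBAP : B = Pᵀ * A * P) (ε : ℝ) :
    (Finset.univ.filter fun i => 0 < ε * hB.eigenvalues i).card =
      (Finset.univ.filter fun i => 0 < ε * hA.eigenvalues i).card := by
  classical
  refine le_antisymm (sylvester_le A B P hA hB hP hBAP ε) ?_
  have hP' : IsUnit (P⁻¹).det := by
    rw [Matrix.det_nonsing_inv]
    exact isUnit_ringInverse.mpr hP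
  refine sylvester_le B A P⁻¹ hB hA hP' ?_ ε
  have e1 : (P⁻¹)ᵀ * Pᵀ = 1 := by
    rw [← Matrix.transpose_mul, Matrix.mul_nonsing_inv P hP, Matrix.transpose_one]
  rw [hBAP, show (P⁻¹)ᵀ * (Pᵀ * A * P) * P⁻¹ = ((P⁻¹)ᵀ * Pᵀ) * A * (P * P⁻¹) by
    noncomm_ring, e1, Matrix.mul_nonsing_inv P hP, Matrix.one_mul, Matrix.mul_one]

end InertiaAux

theorem stmt12 (N : ℕ) (K : Matrix (Fin N) (Fin N) ℝ)
    (d : Fin N → ℝ) (hd : ∀ i, 0 < d i) (hsym : (Matrix.diagonal d * K).IsSymm)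
    (f g : Fin N → ℝ) (hf : ∀ i, 0 < f i) (hg : ∀ i, 0 < g i) :
    posCount K = posCount (Matrix.diagonal f * K * Matrix.diagonal g) ∧
    negCount K = negCount (Matrix.diagonal f * K * Matrix.diagonal g) := by
  classical
  set a : Fin N → ℝ := fun i => Real.sqrt (d i) with ha
  set b : Fin N → ℝ := fun i => Real.sqrt (f i) with hb
  set c : Fin N → ℝ := fun i => Real.sqrt (g i) with hc
  have hap : ∀ i, 0 < a i := fun i => Real.sqrt_pos.mpr (hd i)
  have hbp : ∀ i, 0 < b i := fun i => Real.sqrt_pos.mpr (hf i)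
  have hcp : ∀ i, 0 < c i := fun i => Real.sqrt_pos.mpr (hg i)
  have hd' : ∀ i, d i = a i * a i := fun i => (Real.mul_self_sqrt (hd i).le).symm
  have hf' : ∀ i, f i = b i * b i := fun i => (Real.mul_self_sqrt (hf i).le).symm
  have hg' : ∀ i, g i = c i * c i := fun i => (Real.mul_self_sqrt (hg i).le).symm
  set M : Matrix (Fin N) (Fin N) ℝ := Matrix.diagonal f * K * Matrix.diagonal g with hM
  set A₁ : Matrix (Fin N) (Fin N) ℝ :=
    diagonal a * K * diagonal (fun i => (a i)⁻¹) with hA₁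
  set A₂ : Matrix (Fin N) (Fin N) ℝ :=
    diagonal (fun i => a i * b i * c i) * K * diagonal (fun i => b i * c i / a i) with hA₂
  -- symmetry of A₁ and A₂
  have hA1rep : A₁ = diagonal (fun i => (a i)⁻¹) * (diagonal d * K) * diagonal (fun i => (a i)⁻¹) := by
    ext i j
    simp only [hA₁, Matrix.mul_diagonal, Matrix.diagonal_mul]
    rw [hd' i]
    field_simp [(hap i).ne', (hap j).ne']
  have hA2rep : A₂ = diagonal (fun i => b i * c i / a i) * (diagonal d * K)
      * diagonal (fun i => b i * c i / a i) := by
    ext i j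
    simp only [hA₂, Matrix.mul_diagonal, Matrix.diagonal_mul]
    rw [hd' i]
    field_simp [(hap i).ne', (hap j).ne']
  have hsymm_of_rep : ∀ w : Fin N → ℝ,
      (diagonal w * (diagonal d * K) * diagonal w).IsSymm := by
    intro w
    rw [Matrix.IsSymm, Matrix.transpose_mul, Matrix.transpose_mul, Matrix.diagonal_transpose,
      hsym.eq, Matrix.mul_assoc]
    simp only [Matrix.mul_assoc]
  have hA1symm : A₁.IsSymm := by rw [hA1rep]; exact hsymm_of_rep _
  have hA2symm : A₂.IsSymm := by rw [hA2rep]; exact hsymm_of_rep _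
  have hA1h : A₁.IsHermitian := isHermitian_of_isSymm A₁ hA1symm
  have hA2h : A₂.IsHermitian := isHermitian_of_isSymm A₂ hA2symm
  -- similarity K ~ A₁
  have hKrep : K = diagonal (fun i => (a i)⁻¹) * A₁ * diagonal a := by
    ext i j
    simp only [hA₁, Matrix.mul_diagonal, Matrix.diagonal_mul]
    field_simp [(hap i).ne', (hap j).ne']
  have h1inv : diagonal (fun i => (a i)⁻¹) * diagonal a = (1 : Matrix (Fin N) (Fin N) ℝ) := by
    have he : (fun i => (a i)⁻¹ * a i) = fun _ => (1:ℝ) :=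
      funext fun i => inv_mul_cancel₀ (hap i).ne'
    rw [Matrix.diagonal_mul_diagonal, he, Matrix.diagonal_one]
  obtain ⟨hpK, hnK⟩ := counts_similar A₁ K (diagonal (fun i => (a i)⁻¹)) (diagonal a) h1inv hKrep
  -- similarity M ~ A₂
  have hMrep : M = diagonal (fun i => b i / (a i * c i)) * A₂
      * diagonal (fun i => a i * c i / b i) := by
    ext i j
    simp only [hM, hA₂, Matrix.mul_diagonal, Matrix.diagonal_mul]
    rw [hf' i, hg' j]
    field_simp [(hap i).ne', (hbp i).ne', (hcp i).ne', (hap j).ne', (hbp j).ne', (hcp j).ne']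
  have h2inv : diagonal (fun i => b i / (a i * c i)) * diagonal (fun i => a i * c i / b i)
      = (1 : Matrix (Fin N) (Fin N) ℝ) := by
    have he : (fun i => b i / (a i * c i) * (a i * c i / b i)) = fun _ => (1:ℝ) :=
      funext fun i => by
        rw [div_mul_div_comm, mul_comm (a i * c i) (b i)]
        exact div_self (mul_pos (hbp i) (mul_pos (hap i) (hcp i))).ne'
    rw [Matrix.diagonal_mul_diagonal, he, Matrix.diagonal_one]
  obtain ⟨hpM, hnM⟩ := counts_similar A₂ M (diagonal (fun i => b i / (a i * c i)))
    (diagonal (fun i => a i * c i / b i)) h2inv hMrep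
  -- congruence A₂ = Pᵀ A₁ P
  have hcongr : A₂ = (diagonal (fun i => b i * c i))ᵀ * A₁ * diagonal (fun i => b i * c i) := by
    rw [Matrix.diagonal_transpose]
    ext i j
    simp only [hA₁, hA₂, Matrix.mul_diagonal, Matrix.diagonal_mul]
    field_simp [(hap i).ne', (hap j).ne', (hbp i).ne', (hbp j).ne', (hcp i).ne', (hcp j).ne']
  have hdetP : IsUnit (diagonal (fun i => b i * c i)).det := by
    rw [Matrix.det_diagonal]
    exact isUnit_iff_ne_zero.mpr (Finset.prod_ne_zero_iff.mpr
      fun i _ => (mul_pos (hbp i) (hcp i)).ne')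
  obtain ⟨hpA1, hnA1⟩ := posCount_hermitian A₁ hA1h
  obtain ⟨hpA2, hnA2⟩ := posCount_hermitian A₂ hA2h
  have hsylpos := sylvester_eq A₁ A₂ (diagonal (fun i => b i * c i)) hA1h hA2h hdetP hcongr 1
  have hsylneg := sylvester_eq A₁ A₂ (diagonal (fun i => b i * c i)) hA1h hA2h hdetP hcongr (-1)
  have hfilt1 : ∀ (h : Matrix (Fin N) (Fin N) ℝ) (hh : h.IsHermitian),
      (Finset.univ.filter fun i => 0 < (1:ℝ) * hh.eigenvalues i)
        = (Finset.univ.filter fun i => 0 < hh.eigenvalues i) := by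
    intro h hh; apply Finset.filter_congr; intro i _; rw [one_mul]
  have hfilt2 : ∀ (h : Matrix (Fin N) (Fin N) ℝ) (hh : h.IsHermitian),
      (Finset.univ.filter fun i => 0 < (-1:ℝ) * hh.eigenvalues i)
        = (Finset.univ.filter fun i => hh.eigenvalues i < 0) := by
    intro h hh; apply Finset.filter_congr; intro i _
    constructor <;> intro hx <;> nlinarith
  rw [hfilt1 _ hA1h, hfilt1 _ hA2h] at hsylpos
  rw [hfilt2 _ hA1h, hfilt2 _ hA2h] at hsylneg
  constructor
  · rw [hpK, hpM, hpA1, hpA2, hsylpos]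
  · rw [hnK, hnM, hnA1, hnA2, hsylneg]
end

section
/- Let K be an N×N matrix with non-negative entries such that ρ(K) > 0 and suppose there exist two disjoint nonempty index sets A, B ⊆ {1,…,N} with K_{ij} = 0 whenever (i ∈ A, j ∉ A) or (i ∈ B, j ∉ B) or (i ∉ A∪B, j ∈ A∪B), and both diagonal blocks K_A = (K_{ij})_{i,j∈A} and K_B = (K_{ij})_{i,j∈B} have positive spectral radius. Then the function η ↦ ρ(K·Diag(η)) is not concave on [0,1]^N. -/
open Matrix

lemma mem_spec_iff {n : Type*} [Fintype n] [DecidableEq n] (M : Matrix n n ℂ) (μ : ℂ) :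
    μ ∈ spectrum ℂ M ↔ ∃ v, v ≠ 0 ∧ M.mulVec v = μ • v := by
  rw [spectrum.mem_iff, Matrix.isUnit_iff_isUnit_det, isUnit_iff_ne_zero, not_ne_iff,
    ← Matrix.exists_mulVec_eq_zero_iff]
  constructor
  · rintro ⟨v, hv, h⟩
    refine ⟨v, hv, ?_⟩
    have : (algebraMap ℂ (Matrix n n ℂ) μ).mulVec v - M.mulVec v = 0 := by
      rw [← Matrix.sub_mulVec]; exact h
    have h2 : (algebraMap ℂ (Matrix n n ℂ) μ).mulVec v = μ • v := by
      rw [Algebra.algebraMap_eq_smul_one, Matrix.smul_mulVec, Matrix.one_mulVec]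
    rw [h2] at this
    exact (eq_of_sub_eq_zero this).symm
  · rintro ⟨v, hv, h⟩
    refine ⟨v, hv, ?_⟩
    rw [Matrix.sub_mulVec, Algebra.algebraMap_eq_smul_one, Matrix.smul_mulVec,
      Matrix.one_mulVec, h, sub_self]

lemma abs_le_specRadC {n : Type*} [Fintype n] [DecidableEq n] {M : Matrix n n ℂ} {μ : ℂ}
    (h : μ ∈ spectrum ℂ M) : ‖μ‖ ≤ specRadC M :=
  le_csSup ((M.finite_spectrum.image _).bddAbove) ⟨μ, h, rfl⟩

lemma specRadC_le {n : Type*} [Fintype n] [DecidableEq n] {M : Matrix n n ℂ} {r : ℝ}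
    (hr : 0 ≤ r) (h : ∀ μ ∈ spectrum ℂ M, ‖μ‖ ≤ r) : specRadC M ≤ r :=
  Real.sSup_le (by rintro x ⟨μ, hμ, rfl⟩; exact h μ hμ) hr

lemma exists_abs_eq {n : Type*} [Fintype n] [DecidableEq n] {M : Matrix n n ℂ}
    (h : 0 < specRadC M) : ∃ μ ∈ spectrum ℂ M, ‖μ‖ = specRadC M := by
  have hfin : ((fun z : ℂ => ‖z‖) '' spectrum ℂ M).Finite := M.finite_spectrum.image _
  have hne : ((fun z : ℂ => ‖z‖) '' spectrum ℂ M).Nonempty := by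
    by_contra h'
    rw [Set.not_nonempty_iff_eq_empty] at h'
    rw [specRadC, h', Real.sSup_empty] at h
    exact lt_irrefl 0 h
  obtain ⟨μ, hμ, heq⟩ := hne.csSup_mem hfin
  exact ⟨μ, hμ, heq⟩

lemma key (N : ℕ) (K : Matrix (Fin N) (Fin N) ℝ)
    (A B : Finset (Fin N)) (hAB : Disjoint A B)
    (hzero : ∀ i j, ((i ∈ A ∧ j ∉ A) ∨ (i ∈ B ∧ j ∉ B) ∨
      (i ∉ A ∪ B ∧ j ∈ A ∪ B)) → K i j = 0)
    (hA' : 0 < specRad (K.submatrix ((↑) : {i // i ∈ A} → Fin N) ((↑) : {i // i ∈ A} → Fin N)))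
    (hB' : 0 < specRad (K.submatrix ((↑) : {i // i ∈ B} → Fin N) ((↑) : {i // i ∈ B} → Fin N)))
    (hle : specRad (K.submatrix ((↑) : {i // i ∈ A} → Fin N) ((↑) : {i // i ∈ A} → Fin N)) ≤
           specRad (K.submatrix ((↑) : {i // i ∈ B} → Fin N) ((↑) : {i // i ∈ B} → Fin N))) :
    ¬ ConcaveOn ℝ (Set.Icc (0 : Fin N → ℝ) 1)
      (fun η => specRad (K * Matrix.diagonal η)) := by
  classical
  intro hconc
  set KC : Matrix (Fin N) (Fin N) ℂ := K.map Complex.ofReal with hKCdef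
  have hKC : ∀ i j, KC i j = (K i j : ℂ) := fun i j => rfl
  set ρA := specRad (K.submatrix ((↑) : {i // i ∈ A} → Fin N) ((↑) : {i // i ∈ A} → Fin N))
    with hρA
  set ρB := specRad (K.submatrix ((↑) : {i // i ∈ B} → Fin N) ((↑) : {i // i ∈ B} → Fin N))
    with hρB
  have hApos : 0 < ρA := hA'
  have hBpos : 0 < ρB := hB'
  have hACeq : ρA
      = specRadC (KC.submatrix ((↑) : {i // i ∈ A} → Fin N) ((↑) : {i // i ∈ A} → Fin N)) := rfl
  have hBCeq : ρB
      = specRadC (KC.submatrix ((↑) : {i // i ∈ B} → Fin N) ((↑) : {i // i ∈ B} → Fin N)) := rfl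
  set c := ρA / ρB with hcdef
  have hc0 : 0 < c := div_pos hApos hBpos
  have hc1 : c ≤ 1 := (div_le_one hBpos).mpr hle
  have hcB : c * ρB = ρA := div_mul_cancel₀ ρA (ne_of_gt hBpos)
  -- conversion of specRad to specRadC
  have hconv : ∀ η : Fin N → ℝ,
      specRad (K * Matrix.diagonal η)
        = specRadC (KC * Matrix.diagonal fun j => ((η j : ℝ) : ℂ)) := by
    intro η
    unfold specRad
    congr 1
    ext i j
    simp [Matrix.map_apply, Matrix.mul_diagonal, hKCdef]
  -- eigen equation unfolding
  have hmv : ∀ (η : Fin N → ℝ) (v : Fin N → ℂ) (μ : ℂ),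
      (KC * Matrix.diagonal fun j => ((η j : ℝ) : ℂ)).mulVec v = μ • v ↔
      ∀ i, ∑ j, (K i j : ℂ) * (η j : ℂ) * v j = μ * v i := by
    intro η v μ
    rw [funext_iff]
    apply forall_congr'
    intro i
    simp [Matrix.mulVec, dotProduct, Matrix.mul_diagonal, hKCdef, Matrix.map_apply]
  -- lower bound
  have lower : ∀ (S : Finset (Fin N)), (∀ i, i ∉ S → ∀ j ∈ S, K i j = 0) → ∀ c' : ℝ, 0 ≤ c' →
      0 < specRadC (KC.submatrix ((↑) : {i // i ∈ S} → Fin N) ((↑) : {i // i ∈ S} → Fin N)) →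
      c' * specRadC (KC.submatrix ((↑) : {i // i ∈ S} → Fin N) ((↑) : {i // i ∈ S} → Fin N))
        ≤ specRad (K * Matrix.diagonal fun j => if j ∈ S then c' else 0) := by
    intro S hS c' hc' hpos
    obtain ⟨μ, hμ, habs⟩ := exists_abs_eq hpos
    obtain ⟨w, hw0, hweq⟩ := (mem_spec_iff _ _).mp hμ
    set v : Fin N → ℂ := fun j => if h : j ∈ S then w ⟨j, h⟩ else 0 with hvdef
    have hv1 : ∀ j, j ∉ S → v j = 0 := fun j hj => dif_neg hj
    have hv2 : ∀ b : {x // x ∈ S}, w b = v ↑b := by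
      rintro ⟨b, hb⟩; simp [hvdef, hb]
    have hvne : v ≠ 0 := by
      obtain ⟨b, hb⟩ := Function.ne_iff.mp hw0
      intro h
      apply hb
      rw [hv2 b, h]; rfl
    have hsum : ∀ (i : Fin N), i ∈ S → ∑ j ∈ S, (K i j : ℂ) * v j = μ * v i := by
      intro i hi
      have h1 := congrFun hweq ⟨i, hi⟩
      simp only [Matrix.mulVec, dotProduct, Matrix.submatrix_apply, Pi.smul_apply,
        smul_eq_mul] at h1
      simp only [hv2, hKC] at h1
      rw [← Finset.sum_coe_sort S (fun j => (K i j : ℂ) * v j)]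
      exact h1
    have hev : (KC * Matrix.diagonal fun j =>
        (((fun j => if j ∈ S then c' else 0) j : ℝ) : ℂ)).mulVec v = ((c' : ℂ) * μ) • v := by
      rw [hmv]
      intro i
      have hrestrict : ∑ j, (K i j : ℂ) * ((if j ∈ S then c' else 0 : ℝ) : ℂ) * v j
          = ∑ j ∈ S, (K i j : ℂ) * (c' : ℂ) * v j := by
        rw [← Finset.sum_subset S.subset_univ]
        · apply Finset.sum_congr rfl; intro j hj; rw [if_pos hj]
        · intro j _ hj; rw [if_neg hj]; push_cast; ring
      rw [hrestrict]
      by_cases hi : i ∈ S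
      · rw [show ∑ j ∈ S, (K i j : ℂ) * (c' : ℂ) * v j
            = (c' : ℂ) * ∑ j ∈ S, (K i j : ℂ) * v j by
            rw [Finset.mul_sum]; apply Finset.sum_congr rfl; intros; ring]
        rw [hsum i hi]; ring
      · rw [hv1 i hi, mul_zero]
        apply Finset.sum_eq_zero
        intro j hj
        rw [hS i hi j hj]; push_cast; ring
    have hmem : (c' : ℂ) * μ ∈ spectrum ℂ (KC * Matrix.diagonal fun j =>
        (((fun j => if j ∈ S then c' else 0) j : ℝ) : ℂ)) :=
      (mem_spec_iff _ _).mpr ⟨v, hvne, hev⟩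
    have hfin := abs_le_specRadC hmem
    rw [norm_mul, Complex.norm_real, Real.norm_eq_abs, abs_of_nonneg hc', habs] at hfin
    rw [hconv]
    exact hfin

  -- the three strategy vectors
  set η₁ : Fin N → ℝ := fun j => if j ∈ A then 1 else 0 with hη₁
  set η₂ : Fin N → ℝ := fun j => if j ∈ B then c else 0 with hη₂
  set ηm : Fin N → ℝ := fun j => if j ∈ A then 1/2 else if j ∈ B then c/2 else 0 with hηm
  have hdisj : ∀ j, j ∈ A → j ∈ B → False := fun j hjA hjB =>
    Finset.disjoint_left.mp hAB hjA hjB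
  have hmix : (1/2 : ℝ) • η₁ + (1/2 : ℝ) • η₂ = ηm := by
    funext j
    by_cases hjA : j ∈ A
    · have hjB : j ∉ B := fun h => hdisj j hjA h
      simp [hη₁, hη₂, hηm, hjA, hjB]
    · by_cases hjB : j ∈ B
      · simp [hη₁, hη₂, hηm, hjA, hjB]
        ring
      · simp [hη₁, hη₂, hηm, hjA, hjB]
  have hmem₁ : η₁ ∈ Set.Icc (0 : Fin N → ℝ) 1 := by
    constructor <;> intro j <;> by_cases hj : j ∈ A <;>
      simp [hη₁, hj, Pi.le_def, Pi.zero_apply, Pi.one_apply]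
  have hmem₂ : η₂ ∈ Set.Icc (0 : Fin N → ℝ) 1 := by
    constructor <;> intro j <;> by_cases hj : j ∈ B <;>
      simp [hη₂, hj, le_of_lt hc0, hc1]
  have hSA : ∀ i, i ∉ A → ∀ j ∈ A, K i j = 0 := by
    intro i hi j hj
    by_cases hiB : i ∈ B
    · exact hzero i j (Or.inr (Or.inl ⟨hiB, fun h => hdisj j hj h⟩))
    · exact hzero i j (Or.inr (Or.inr ⟨by simp [hi, hiB], by simp [hj]⟩))
  have hSB : ∀ i, i ∉ B → ∀ j ∈ B, K i j = 0 := by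
    intro i hi j hj
    by_cases hiA : i ∈ A
    · exact hzero i j (Or.inl ⟨hiA, fun h => hdisj j h hj⟩)
    · exact hzero i j (Or.inr (Or.inr ⟨by simp [hi, hiA], by simp [hj]⟩))
  have hlow₁ : ρA ≤ specRad (K * Matrix.diagonal η₁) := by
    have h := lower A hSA 1 zero_le_one (hACeq ▸ hApos)
    rwa [one_mul, ← hACeq] at h
  have hlow₂ : ρA ≤ specRad (K * Matrix.diagonal η₂) := by
    have h := lower B hSB c (le_of_lt hc0) (hBCeq ▸ hBpos)
    rwa [← hBCeq, hcB] at h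
  -- upper bound at the midpoint
  have hup : specRad (K * Matrix.diagonal ηm) ≤ ρA / 2 := by
    rw [hconv]
    apply specRadC_le (by positivity)
    intro μ hμ
    by_cases hμ0 : μ = 0
    · simp only [hμ0, norm_zero]
      positivity
    obtain ⟨v, hv0, hveq⟩ := (mem_spec_iff _ _).mp hμ
    rw [hmv] at hveq
    have hvout : ∀ i, i ∉ A → i ∉ B → v i = 0 := by
      intro i hiA hiB
      have hz : ∀ j ∈ Finset.univ, (K i j : ℂ) * ((ηm j : ℝ) : ℂ) * v j = 0 := by
        intro j _
        by_cases hjA : j ∈ A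
        · rw [hzero i j (Or.inr (Or.inr ⟨by simp [hiA, hiB], by simp [hjA]⟩))]
          push_cast; ring
        · by_cases hjB : j ∈ B
          · rw [hzero i j (Or.inr (Or.inr ⟨by simp [hiA, hiB], by simp [hjB]⟩))]
            push_cast; ring
          · simp [hηm, hjA, hjB]
      have h1 : μ * v i = 0 := by
        rw [← hveq i, Finset.sum_eq_zero hz]
      exact (mul_eq_zero.mp h1).resolve_left hμ0
    have hsumA : ∀ i, i ∈ A → ∑ j ∈ A, (K i j : ℂ) * v j = (2 * μ) * v i := by
      intro i hi
      have h1 := hveq i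
      have hres : ∑ j, (K i j : ℂ) * ((ηm j : ℝ) : ℂ) * v j
          = ∑ j ∈ A, (K i j : ℂ) * ((1/2 : ℝ) : ℂ) * v j := by
        rw [← Finset.sum_subset A.subset_univ]
        · apply Finset.sum_congr rfl
          intro j hj
          simp [hηm, hj]
        · intro j _ hj
          rw [hzero i j (Or.inl ⟨hi, hj⟩)]
          push_cast; ring
      rw [hres] at h1
      have h2 : ∑ j ∈ A, (K i j : ℂ) * v j
          = 2 * ∑ j ∈ A, (K i j : ℂ) * ((1/2 : ℝ) : ℂ) * v j := by
        rw [Finset.mul_sum]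
        apply Finset.sum_congr rfl
        intros
        push_cast; ring
      rw [h2, h1]; ring
    have hsumB : ∀ i, i ∈ B → ∑ j ∈ B, (K i j : ℂ) * v j = (((2/c : ℝ) : ℂ) * μ) * v i := by
      intro i hi
      have h1 := hveq i
      have hres : ∑ j, (K i j : ℂ) * ((ηm j : ℝ) : ℂ) * v j
          = ∑ j ∈ B, (K i j : ℂ) * ((c/2 : ℝ) : ℂ) * v j := by
        rw [← Finset.sum_subset B.subset_univ]
        · apply Finset.sum_congr rfl
          intro j hj
          have hjA : j ∉ A := fun h => hdisj j h hj
          simp [hηm, hj, hjA]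
        · intro j _ hj
          rw [hzero i j (Or.inr (Or.inl ⟨hi, hj⟩))]
          push_cast; ring
      rw [hres] at h1
      have hcne : (c : ℂ) ≠ 0 := by
        exact_mod_cast ne_of_gt hc0
      have h2 : ∑ j ∈ B, (K i j : ℂ) * v j
          = ((2/c : ℝ) : ℂ) * ∑ j ∈ B, (K i j : ℂ) * ((c/2 : ℝ) : ℂ) * v j := by
        rw [Finset.mul_sum]
        apply Finset.sum_congr rfl
        intros
        push_cast
        field_simp
      rw [h2, h1]; ring
    by_cases hwA : ∃ a : {x // x ∈ A}, v ↑a ≠ 0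
    · -- eigenvector supported on A
      obtain ⟨a0, ha0⟩ := hwA
      have hevA : (KC.submatrix ((↑) : {i // i ∈ A} → Fin N)
          ((↑) : {i // i ∈ A} → Fin N)).mulVec (fun a : {i // i ∈ A} => v ↑a) = (2 * μ) • (fun a : {i // i ∈ A} => v ↑a) := by
        funext a
        simp only [Matrix.mulVec, dotProduct, Matrix.submatrix_apply, Pi.smul_apply,
          smul_eq_mul, hKC]
        rw [Finset.sum_coe_sort A (fun j => (K (↑a) j : ℂ) * v j)]
        exact hsumA ↑a a.2
      have hmemA : (2 * μ) ∈ spectrum ℂ (KC.submatrix ((↑) : {i // i ∈ A} → Fin N)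
          ((↑) : {i // i ∈ A} → Fin N)) :=
        (mem_spec_iff _ _).mpr ⟨_, fun h => ha0 (congrFun h a0), hevA⟩
      have hb := abs_le_specRadC hmemA
      rw [norm_mul, ← hACeq] at hb
      simp only [Complex.norm_two] at hb
      linarith
    · -- eigenvector supported on B
      push_neg at hwA
      have hwB : ∃ b : {x // x ∈ B}, v ↑b ≠ 0 := by
        by_contra hB0
        push_neg at hB0
        apply hv0
        funext j
        by_cases hjA : j ∈ A
        · exact hwA ⟨j, hjA⟩
        · by_cases hjB : j ∈ B
          · exact hB0 ⟨j, hjB⟩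
          · exact hvout j hjA hjB
      obtain ⟨b0, hb0⟩ := hwB
      have hevB : (KC.submatrix ((↑) : {i // i ∈ B} → Fin N)
          ((↑) : {i // i ∈ B} → Fin N)).mulVec (fun b : {i // i ∈ B} => v ↑b)
          = (((2/c : ℝ) : ℂ) * μ) • (fun b : {i // i ∈ B} => v ↑b) := by
        funext b
        simp only [Matrix.mulVec, dotProduct, Matrix.submatrix_apply, Pi.smul_apply,
          smul_eq_mul, hKC]
        rw [Finset.sum_coe_sort B (fun j => (K (↑b) j : ℂ) * v j)]
        exact hsumB ↑b b.2
      have hmemB : (((2/c : ℝ) : ℂ) * μ) ∈ spectrum ℂ (KC.submatrix ((↑) : {i // i ∈ B} → Fin N)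
          ((↑) : {i // i ∈ B} → Fin N)) :=
        (mem_spec_iff _ _).mpr ⟨_, fun h => hb0 (congrFun h b0), hevB⟩
      have hb := abs_le_specRadC hmemB
      rw [norm_mul, ← hBCeq, Complex.norm_real, Real.norm_eq_abs,
        abs_of_nonneg (by positivity : (0:ℝ) ≤ 2/c)] at hb
      have h3 : (2/c) * ‖μ‖ ≤ ρB := hb
      have h4 : ‖μ‖ ≤ c * ρB / 2 := by
        have h5 := mul_le_mul_of_nonneg_left h3 (le_of_lt hc0)
        have h6 : c * (2/c * ‖μ‖) = 2 * ‖μ‖ := by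
          field_simp
        rw [h6] at h5
        linarith
      rw [hcB] at h4
      linarith
  -- combine with concavity
  have hcc := hconc.2 hmem₁ hmem₂ (by norm_num : (0:ℝ) ≤ 1/2) (by norm_num : (0:ℝ) ≤ 1/2)
    (by norm_num : (1/2 : ℝ) + 1/2 = 1)
  simp only [smul_eq_mul, hmix] at hcc
  linarith

theorem stmt14 (N : ℕ) (K : Matrix (Fin N) (Fin N) ℝ) (hK : ∀ i j, 0 ≤ K i j)
    (hρ : 0 < specRad K)
    (A B : Finset (Fin N)) (hA : A.Nonempty) (hB : B.Nonempty) (hAB : Disjoint A B)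
    (hzero : ∀ i j, ((i ∈ A ∧ j ∉ A) ∨ (i ∈ B ∧ j ∉ B) ∨
      (i ∉ A ∪ B ∧ j ∈ A ∪ B)) → K i j = 0)
    (hA' : 0 < specRad (K.submatrix ((↑) : {i // i ∈ A} → Fin N) ((↑) : {i // i ∈ A} → Fin N)))
    (hB' : 0 < specRad (K.submatrix ((↑) : {i // i ∈ B} → Fin N) ((↑) : {i // i ∈ B} → Fin N))) :
    ¬ ConcaveOn ℝ (Set.Icc (0 : Fin N → ℝ) 1)
      (fun η => specRad (K * Matrix.diagonal η)) := by
  have hzero' : ∀ i j, ((i ∈ B ∧ j ∉ B) ∨ (i ∈ A ∧ j ∉ A) ∨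
      (i ∉ B ∪ A ∧ j ∈ B ∪ A)) → K i j = 0 := by
    intro i j hij
    apply hzero i j
    rcases hij with h1 | h2 | h3
    · exact Or.inr (Or.inl h1)
    · exact Or.inl h2
    · exact Or.inr (Or.inr ⟨by simpa [Finset.union_comm] using h3.1,
        by simpa [Finset.union_comm] using h3.2⟩)
  rcases le_total
    (specRad (K.submatrix ((↑) : {i // i ∈ A} → Fin N) ((↑) : {i // i ∈ A} → Fin N)))
    (specRad (K.submatrix ((↑) : {i // i ∈ B} → Fin N) ((↑) : {i // i ∈ B} → Fin N))) with h | h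
  · exact key N K A B hAB hzero hA' hB' h
  · exact key N K B A hAB.symm hzero' hB' hA' h
end
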